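/- (Katz's explicit cyclic vector) Let (F, d) be a differential field of characteristic zero with d ≠ 0, (M, ∇) a differential module of rank r with basis e₀, …, e_{r−1}, and let a₀, …, a_{r(r−1)} ∈ F be r(r−1)+1 pairwise distinct constants (d(a_i) = 0). Suppose T ∈ F satisfies d(T) = 1. For each i define c_i := Σ_{j=0}^{r−1} ((T − a_i)^j / j!) Σ_{k=0}^{j} (−1)^k C(j,k) ∇^k(e_{j−k}). Then at least one c_i is a cyclic vector of M, i.e. c_i, ∇(c_i), …, ∇^{r−1}(c_i) is an F-basis of M. -/

import Mathlib

open Finset Polynomial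

section KatzAux

variable {F : Type} [Field F]

lemma katz_d_zero (d : F → F) (hd_add : ∀ a b : F, d (a + b) = d a + d b) : d 0 = 0 := by
  have h : d 0 = d 0 + d 0 := by simpa using hd_add 0 0
  exact (left_eq_add.mp h)

lemma katz_d_one (d : F → F) (hd_mul : ∀ a b : F, d (a * b) = d a * b + a * d b) : d 1 = 0 := by
  have h : d 1 = d 1 + d 1 := by simpa using hd_mul 1 1
  exact (left_eq_add.mp h)

lemma katz_d_neg (d : F → F) (hd_add : ∀ a b : F, d (a + b) = d a + d b) (x : F) :
    d (-x) = -d x := by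
  have h : d x + d (-x) = 0 := by
    rw [← hd_add]; simp [katz_d_zero d hd_add]
  exact (neg_eq_of_add_eq_zero_right h).symm

lemma katz_d_natCast (d : F → F) (hd_add : ∀ a b : F, d (a + b) = d a + d b)
    (hd_mul : ∀ a b : F, d (a * b) = d a * b + a * d b) (n : ℕ) : d (n : F) = 0 := by
  induction n with
  | zero => simpa using katz_d_zero d hd_add
  | succ k ih =>
      push_cast
      rw [hd_add, ih, katz_d_one d hd_mul, add_zero]

lemma katz_d_neg_one_pow (d : F → F) (hd_add : ∀ a b : F, d (a + b) = d a + d b)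
    (hd_mul : ∀ a b : F, d (a * b) = d a * b + a * d b) (k : ℕ) : d ((-1 : F) ^ k) = 0 := by
  induction k with
  | zero => simpa using katz_d_one d hd_mul
  | succ m ih =>
      rw [pow_succ, hd_mul, ih, zero_mul, zero_add]
      have : d (-1 : F) = 0 := by
        rw [katz_d_neg d hd_add, katz_d_one d hd_mul, neg_zero]
      rw [this, mul_zero]

lemma katz_d_inv (d : F → F) (hd_mul : ∀ a b : F, d (a * b) = d a * b + a * d b)
    {x : F} (hx : x ≠ 0) (hdx : d x = 0) : d x⁻¹ = 0 := by
  have h := hd_mul x x⁻¹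
  rw [mul_inv_cancel₀ hx, katz_d_one d hd_mul, hdx, zero_mul, zero_add] at h
  rcases mul_eq_zero.mp h.symm with h' | h'
  · exact absurd h' hx
  · exact h'

lemma katz_d_pow (d : F → F) (hd_mul : ∀ a b : F, d (a * b) = d a * b + a * d b)
    {t : F} (ht : d t = 1) (j : ℕ) : d (t ^ (j + 1)) = ((j : F) + 1) * t ^ j := by
  induction j with
  | zero => simp [ht]
  | succ m ih =>
      rw [pow_succ, hd_mul, ih, ht, mul_one]
      push_cast
      ring

variable {M : Type} [AddCommGroup M] [Module F M]

lemma katz_nabla_sum (nabla : M → M) (hnabla_add : ∀ x y : M, nabla (x + y) = nabla x + nabla y)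
    {ι : Type*} (s : Finset ι) (f : ι → M) :
    nabla (∑ i ∈ s, f i) = ∑ i ∈ s, nabla (f i) :=
  map_sum (AddMonoidHom.mk' nabla hnabla_add) f s

end KatzAux

section KatzMain

variable (F : Type) [Field F] [CharZero F] {M : Type} [AddCommGroup M] [Module F M]

/-- The vectors `w_j^{(n)} = Σ_k (-1)^k C(j,k) ∇^k e_{j+n-k}`. -/
def katzW (nabla : M → M) (e : ℕ → M) (n j : ℕ) : M :=
  ∑ k ∈ Finset.range (j + 1),
    ((-1 : F) ^ k * (j.choose k : F)) • nabla^[k] (e (j + n - k))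

/-- The coefficient vectors of `∇^n c` as a polynomial in `t = T - a`. -/
def katzV (r : ℕ) (nabla : M → M) (e : ℕ → M) : ℕ → ℕ → M
  | 0, j => if j < r then ((j.factorial : F)⁻¹) • katzW F nabla e 0 j else 0
  | n + 1, j =>
      if j < r then ((j : F) + 1) • katzV r nabla e n (j + 1) + nabla (katzV r nabla e n j)
      else 0

variable {F}
variable (d : F → F) (hd_add : ∀ a b : F, d (a + b) = d a + d b)
  (hd_mul : ∀ a b : F, d (a * b) = d a * b + a * d b)
  (nabla : M → M) (hnabla_add : ∀ x y : M, nabla (x + y) = nabla x + nabla y)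
  (hLeibniz : ∀ (f : F) (m : M), nabla (f • m) = d f • m + f • nabla m)
  (e : ℕ → M)

omit [CharZero F] in
include hd_add hd_mul hnabla_add hLeibniz in
lemma katzW_step (n j : ℕ) :
    katzW F nabla e (n + 1) j = nabla (katzW F nabla e n j) + katzW F nabla e n (j + 1) := by
  have hconst : ∀ k c : ℕ, d ((-1 : F) ^ k * (c : F)) = 0 := by
    intro k c
    rw [hd_mul, katz_d_neg_one_pow d hd_add hd_mul, katz_d_natCast d hd_add hd_mul,
      zero_mul, mul_zero, add_zero]
  -- nabla of w n j, written as a sum over range (j+2)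
  have h1 : nabla (katzW F nabla e n j)
      = ∑ k ∈ Finset.range (j + 2),
          (if k = 0 then (0 : M)
           else ((-1 : F) ^ (k - 1) * (j.choose (k - 1) : F)) • nabla^[k] (e (j + n + 1 - k))) := by
    rw [katzW, katz_nabla_sum nabla hnabla_add,
      Finset.sum_range_succ' (fun k => if k = 0 then (0 : M)
        else ((-1 : F) ^ (k - 1) * (j.choose (k - 1) : F)) • nabla^[k] (e (j + n + 1 - k))) (j + 1)]
    simp only [Nat.succ_ne_zero, if_neg, not_false_iff, if_true, if_pos, Nat.add_sub_cancel,
      ite_false, ite_true, add_zero, reduceIte]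
    refine Finset.sum_congr rfl fun k hk => ?_
    rw [hLeibniz, hconst k _, zero_smul, zero_add, ← Function.iterate_succ_apply' nabla k]
    have hidx : j + n + 1 - (k + 1) = j + n - k := by omega
    rw [hidx]
  -- w n (j+1), reindexed
  have h2 : katzW F nabla e n (j + 1)
      = ∑ k ∈ Finset.range (j + 2),
          ((-1 : F) ^ k * ((j + 1).choose k : F)) • nabla^[k] (e (j + n + 1 - k)) := by
    rw [katzW]
    refine Finset.sum_congr rfl fun k hk => ?_
    have hidx : j + 1 + n - k = j + n + 1 - k := by omega
    rw [hidx]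
  -- w (n+1) j, extended to range (j+2)
  have h3 : katzW F nabla e (n + 1) j
      = ∑ k ∈ Finset.range (j + 2),
          ((-1 : F) ^ k * (j.choose k : F)) • nabla^[k] (e (j + n + 1 - k)) := by
    rw [Finset.sum_range_succ, Nat.choose_succ_self]
    simp only [Nat.cast_zero, mul_zero, zero_smul, add_zero]
    rw [katzW]
    refine Finset.sum_congr rfl fun k hk => ?_
    have hidx : j + (n + 1) - k = j + n + 1 - k := by omega
    rw [hidx]
  rw [h1, h2, h3, ← Finset.sum_add_distrib]
  refine Finset.sum_congr rfl fun k hk => ?_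
  cases k with
  | zero => simp
  | succ s =>
      rw [if_neg (Nat.succ_ne_zero s), Nat.add_sub_cancel, ← add_smul]
      congr 1
      push_cast [Nat.choose_succ_succ]
      ring

include hd_add hd_mul hnabla_add hLeibniz in
lemma katzV_eq (r : ℕ) : ∀ n j : ℕ, n + j < r →
    katzV F r nabla e n j = ((j.factorial : F)⁻¹) • katzW F nabla e n j := by
  intro n
  induction n with
  | zero =>
      intro j hj
      simp only [katzV]
      rw [if_pos (by omega)]
  | succ m ih =>
      intro j hj
      have hjr : j < r := by omega
      have hfac : ∀ s : ℕ, d ((s.factorial : F)⁻¹) = 0 := fun s =>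
        katz_d_inv d hd_mul (Nat.cast_ne_zero.mpr s.factorial_ne_zero)
          (katz_d_natCast d hd_add hd_mul _)
      simp only [katzV]
      rw [if_pos hjr, ih (j + 1) (by omega), ih j (by omega),
        hLeibniz, hfac j, zero_smul, zero_add,
        katzW_step d hd_add hd_mul nabla hnabla_add hLeibniz e m j, smul_add]
      have hco : ((j : F) + 1) • (((j + 1).factorial : F)⁻¹ • katzW F nabla e m (j + 1))
          = ((j.factorial : F)⁻¹) • katzW F nabla e m (j + 1) := by
        rw [smul_smul]
        congr 1
        rw [Nat.factorial_succ]
        have h2 : (j.factorial : F) ≠ 0 := Nat.cast_ne_zero.mpr j.factorial_ne_zero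
        have h1 : ((j : F) + 1) ≠ 0 := by
          have : ((j + 1 : ℕ) : F) ≠ 0 := Nat.cast_ne_zero.mpr (Nat.succ_ne_zero j)
          push_cast at this; exact this
        push_cast
        field_simp
      rw [hco]
      exact add_comm _ _

omit [CharZero F] in
lemma katzV_of_le (r : ℕ) (n j : ℕ) (h : r ≤ j) : katzV F r nabla e n j = 0 := by
  have h' : ¬ j < r := by omega
  cases n <;> simp only [katzV] <;> rw [if_neg h']

omit [CharZero F] in
include hd_mul hnabla_add hLeibniz in
lemma katz_iter (r : ℕ) (hr : 1 ≤ r) (t : F) (ht : d t = 1) (n : ℕ) :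
    nabla^[n] (∑ j ∈ Finset.range r, t ^ j • katzV F r nabla e 0 j)
      = ∑ j ∈ Finset.range r, t ^ j • katzV F r nabla e n j := by
  induction n with
  | zero => rfl
  | succ m ih =>
      rw [Function.iterate_succ_apply', ih, katz_nabla_sum nabla hnabla_add]
      have hterm : ∀ j, nabla (t ^ j • katzV F r nabla e m j)
          = d (t ^ j) • katzV F r nabla e m j + t ^ j • nabla (katzV F r nabla e m j) :=
        fun j => hLeibniz _ _
      simp only [hterm]
      rw [Finset.sum_add_distrib]
      obtain ⟨s, rfl⟩ : ∃ s, r = s + 1 := ⟨r - 1, by omega⟩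
      have hfirst : ∑ j ∈ Finset.range (s + 1), d (t ^ j) • katzV F (s+1) nabla e m j
          = ∑ j ∈ Finset.range (s + 1),
              (((j : F) + 1) * t ^ j) • katzV F (s+1) nabla e m (j + 1) := by
        rw [Finset.sum_range_succ' (fun j => d (t ^ j) • katzV F (s+1) nabla e m j) s,
          Finset.sum_range_succ (fun j => (((j : F) + 1) * t ^ j) • katzV F (s+1) nabla e m (j + 1)) s,
          katzV_of_le nabla e (s+1) m (s+1) (le_refl _), smul_zero, add_zero]
        simp only [pow_zero, katz_d_one d hd_mul, zero_smul, add_zero]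
        refine Finset.sum_congr rfl fun j hj => ?_
        rw [katz_d_pow d hd_mul ht j]
      rw [hfirst, ← Finset.sum_add_distrib]
      refine Finset.sum_congr rfl fun j hj => ?_
      simp only [katzV]
      rw [if_pos (Finset.mem_range.mp hj), smul_add, smul_smul, mul_comm (t ^ j)]

end KatzMain

/-- Katz's explicit cyclic vector: with `a₀, …, a_{r(r-1)}` distinct
constants and `T` with `d(T) = 1`, at least one of the Katz vectors
`c_i = Σ_j ((T - a_i)^j / j!) Σ_k (-1)^k C(j,k) ∇^k(e_{j-k})` is cyclic. -/
theorem katz_explicit_cyclic_vector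
    {F : Type} [Field F] [CharZero F] (d : F → F)
    (hd_add : ∀ a b : F, d (a + b) = d a + d b)
    (hd_mul : ∀ a b : F, d (a * b) = d a * b + a * d b)
    (hd_ne : d ≠ 0)
    {M : Type} [AddCommGroup M] [Module F M]
    (nabla : M → M)
    (hnabla_add : ∀ x y : M, nabla (x + y) = nabla x + nabla y)
    (hLeibniz : ∀ (f : F) (m : M), nabla (f • m) = d f • m + f • nabla m)
    (r : ℕ) (hr : 1 ≤ r) (e : ℕ → M)
    (he_indep : LinearIndependent F (fun i : Fin r => e (i : ℕ)))
    (he_span : Submodule.span F (Set.range fun i : Fin r => e (i : ℕ)) = ⊤)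
    (a : Fin (r * (r - 1) + 1) → F) (ha_inj : Function.Injective a)
    (ha_const : ∀ i, d (a i) = 0)
    (T : F) (hT : d T = 1) :
    ∃ i : Fin (r * (r - 1) + 1),
      LinearIndependent F (fun n : Fin r => nabla^[(n : ℕ)]
        (∑ j ∈ Finset.range r, (((j.factorial : F))⁻¹ * (T - a i) ^ j) •
          ∑ k ∈ Finset.range (j + 1),
            ((-1 : F) ^ k * (j.choose k : F)) • nabla^[k] (e (j - k)))) ∧
      Submodule.span F (Set.range fun n : Fin r => nabla^[(n : ℕ)]
        (∑ j ∈ Finset.range r, (((j.factorial : F))⁻¹ * (T - a i) ^ j) •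
          ∑ k ∈ Finset.range (j + 1),
            ((-1 : F) ^ k * (j.choose k : F)) • nabla^[k] (e (j - k)))) = ⊤ := by
  classical
  have hspan' : ⊤ ≤ Submodule.span F (Set.range fun i : Fin r => e (i : ℕ)) := he_span.ge
  let b : Module.Basis (Fin r) F M := Module.Basis.mk he_indep hspan'
  have hbe : ∀ n : Fin r, b n = e (n : ℕ) := fun n => Module.Basis.mk_apply he_indep hspan' n
  set V : ℕ → ℕ → M := katzV F r nabla e with hV
  -- The Katz vector rewritten in terms of V
  have hc : ∀ t : F,
      (∑ j ∈ Finset.range r, (((j.factorial : F))⁻¹ * t ^ j) •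
        ∑ k ∈ Finset.range (j + 1), ((-1 : F) ^ k * (j.choose k : F)) • nabla^[k] (e (j - k)))
      = ∑ j ∈ Finset.range r, t ^ j • V 0 j := by
    intro t
    refine Finset.sum_congr rfl fun j hj => ?_
    have hj' : j < r := Finset.mem_range.mp hj
    rw [hV]
    simp only [katzV]
    rw [if_pos hj', katzW, smul_smul, mul_comm (t ^ j)]
    congr 1
  have hdt : ∀ i, d (T - a i) = 1 := by
    intro i
    rw [sub_eq_add_neg, hd_add, hT, katz_d_neg d hd_add, ha_const i, neg_zero, add_zero]
  have hiter : ∀ (i : Fin (r * (r - 1) + 1)) (n : ℕ),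
      nabla^[n] (∑ j ∈ Finset.range r, (T - a i) ^ j • V 0 j)
        = ∑ j ∈ Finset.range r, (T - a i) ^ j • V n j :=
    fun i n => katz_iter d hd_mul nabla hnabla_add hLeibniz e r hr (T - a i) (hdt i) n
  have hV0 : ∀ n : ℕ, n < r → V n 0 = e n := by
    intro n hn
    rw [hV, katzV_eq d hd_add hd_mul nabla hnabla_add hLeibniz e r n 0 (by omega)]
    simp [katzW]
  -- The polynomial matrix
  let Pm : Matrix (Fin r) (Fin r) F[X] :=
    Matrix.of fun n m : Fin r =>
      ∑ j ∈ Finset.range r, Polynomial.C ((b.repr (V (n : ℕ) j)) m) * Polynomial.X ^ j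
  have hPmap : ∀ (t : F) (n m : Fin r), (Pm.map (evalRingHom t)) n m
      = (b.repr (∑ j ∈ Finset.range r, t ^ j • V (n : ℕ) j)) m := by
    intro t n m
    simp only [Pm, Matrix.map_apply, Matrix.of_apply, map_sum, Finsupp.coe_finset_sum,
      Finset.sum_apply, coe_evalRingHom, Polynomial.eval_finset_sum, eval_mul, eval_pow,
      eval_C, eval_X, map_smul, Finsupp.smul_apply, smul_eq_mul]
    exact Finset.sum_congr rfl fun j _ => mul_comm _ _
  have hdet_eval : ∀ t : F, Polynomial.eval t Pm.det = (Pm.map (evalRingHom t)).det := by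
    intro t
    have := RingHom.map_det (evalRingHom t) Pm
    simpa [coe_evalRingHom] using this
  have h0 : Polynomial.eval 0 Pm.det = 1 := by
    rw [hdet_eval 0]
    have hone : Pm.map (evalRingHom 0) = (1 : Matrix (Fin r) (Fin r) F) := by
      ext n m
      rw [hPmap 0 n m]
      have hsum : (∑ j ∈ Finset.range r, (0 : F) ^ j • V (n : ℕ) j) = V (n : ℕ) 0 := by
        rw [Finset.sum_eq_single_of_mem 0 (Finset.mem_range.mpr hr)]
        · simp
        · intro j _ hj0; rw [zero_pow hj0, zero_smul]
      rw [hsum, hV0 (n : ℕ) n.isLt, ← hbe n, b.repr_self, Matrix.one_apply,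
        Finsupp.single_apply]
    rw [hone, Matrix.det_one]
  have hdeg : Pm.det.natDegree ≤ r * (r - 1) := by
    rw [Matrix.det_apply']
    refine Polynomial.natDegree_sum_le_of_forall_le _ _ fun σ _ => ?_
    refine Polynomial.natDegree_mul_le.trans ?_
    rw [Polynomial.natDegree_intCast, zero_add]
    refine (Polynomial.natDegree_prod_le _ _).trans ?_
    have hentry : ∀ p q : Fin r, (Pm p q).natDegree ≤ r - 1 := by
      intro p q
      simp only [Pm, Matrix.of_apply]
      refine Polynomial.natDegree_sum_le_of_forall_le _ _ fun j hj => ?_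
      exact (Polynomial.natDegree_C_mul_X_pow_le _ j).trans
        (by have := Finset.mem_range.mp hj; omega)
    calc ∑ i, (Pm (σ i) i).natDegree ≤ ∑ _i : Fin r, (r - 1) :=
          Finset.sum_le_sum fun i _ => hentry _ _
      _ = r * (r - 1) := by simp [Finset.sum_const, mul_comm]
  have hPne : Pm.det ≠ 0 := by
    intro h
    rw [h] at h0
    simp at h0
  set Q : F[X] := Pm.det.comp (Polynomial.C T - Polynomial.X) with hQ
  have hinner : (Polynomial.C T - Polynomial.X).comp (Polynomial.C T - Polynomial.X)
      = (Polynomial.X : F[X]) := by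
    simp [Polynomial.sub_comp]
  have hcomp : Q.comp (Polynomial.C T - Polynomial.X) = Pm.det := by
    rw [hQ, Polynomial.comp_assoc, hinner, Polynomial.comp_X]
  have hQne : Q ≠ 0 := by
    intro h
    rw [h, Polynomial.zero_comp] at hcomp
    exact hPne hcomp.symm
  have hQdeg : Q.natDegree ≤ r * (r - 1) := by
    have h1 : (Polynomial.C T - Polynomial.X).natDegree = 1 := by
      have h2 : Polynomial.C T - Polynomial.X = -(Polynomial.X - Polynomial.C T) := by ring
      rw [h2, Polynomial.natDegree_neg, Polynomial.natDegree_X_sub_C]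
    rw [hQ, Polynomial.natDegree_comp, h1, mul_one]
    exact hdeg
  have hex : ∃ i, Polynomial.eval (a i) Q ≠ 0 := by
    by_contra hall
    push_neg at hall
    have hsub : Finset.univ.image a ⊆ Q.roots.toFinset := by
      intro x hx
      obtain ⟨i, _, rfl⟩ := Finset.mem_image.mp hx
      rw [Multiset.mem_toFinset, Polynomial.mem_roots hQne]
      exact hall i
    have h1 := Finset.card_le_card hsub
    rw [Finset.card_image_of_injective _ ha_inj, Finset.card_univ, Fintype.card_fin] at h1
    have h2 := Multiset.toFinset_card_le Q.roots
    have h3 := Polynomial.card_roots' Q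
    omega
  obtain ⟨i, hi⟩ := hex
  have heval : Polynomial.eval (a i) Q = Polynomial.eval (T - a i) Pm.det := by
    rw [hQ, Polynomial.eval_comp]
    simp
  refine ⟨i, ?_⟩
  have hkey : ∀ n : Fin r, nabla^[(n : ℕ)]
      (∑ j ∈ Finset.range r, (((j.factorial : F))⁻¹ * (T - a i) ^ j) •
        ∑ k ∈ Finset.range (j + 1),
          ((-1 : F) ^ k * (j.choose k : F)) • nabla^[k] (e (j - k)))
      = ∑ j ∈ Finset.range r, (T - a i) ^ j • V (n : ℕ) j := by
    intro n
    rw [hc (T - a i), hiter i (n : ℕ)]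
  have hMt : Matrix.transpose (b.toMatrix (fun n : Fin r => nabla^[(n : ℕ)]
      (∑ j ∈ Finset.range r, (((j.factorial : F))⁻¹ * (T - a i) ^ j) •
        ∑ k ∈ Finset.range (j + 1),
          ((-1 : F) ^ k * (j.choose k : F)) • nabla^[k] (e (j - k)))))
      = Pm.map (evalRingHom (T - a i)) := by
    ext n m
    rw [Matrix.transpose_apply, Module.Basis.toMatrix_apply, hkey n]
    exact (hPmap (T - a i) n m).symm
  have hdetne : (b.toMatrix (fun n : Fin r => nabla^[(n : ℕ)]
      (∑ j ∈ Finset.range r, (((j.factorial : F))⁻¹ * (T - a i) ^ j) •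
        ∑ k ∈ Finset.range (j + 1),
          ((-1 : F) ^ k * (j.choose k : F)) • nabla^[k] (e (j - k))))).det ≠ 0 := by
    rw [← Matrix.det_transpose, hMt, ← hdet_eval, ← heval]
    exact hi
  have hunit : IsUnit (b.det (fun n : Fin r => nabla^[(n : ℕ)]
      (∑ j ∈ Finset.range r, (((j.factorial : F))⁻¹ * (T - a i) ^ j) •
        ∑ k ∈ Finset.range (j + 1),
          ((-1 : F) ^ k * (j.choose k : F)) • nabla^[k] (e (j - k))))) := by
    rw [Module.Basis.det_apply]
    exact isUnit_iff_ne_zero.mpr hdetne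
  exact (Module.Basis.is_basis_iff_det b).mpr hunit
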